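/- arXiv:1305.2391 — 2 statements merged into one kernel-verified Lean document; each statement's English description precedes it below -/
import Mathlib

section
/- Let S be a recursively enumerable set of finite binary strings such that μ(⟦S⟧) < 1 and μ(⟦S⟧) is a computable real. Then there exists a computable infinite binary sequence α with α ∉ ⟦S⟧. -/
open MeasureTheory

/-- The cylinder of infinite binary sequences extending the finite string `x`. -/
def cylinder (x : List Bool) : Set (ℕ → Bool) :=
  {α | ∀ i : Fin x.length, α i.val = x.get i}

/-- `⟦S⟧`: sequences having some prefix in `S`. -/
def openOf (S : Set (List Bool)) : Set (ℕ → Bool) :=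
  ⋃ x ∈ S, cylinder x

/-- `S` is recursively enumerable: it is the set of values of a computable
partial enumeration. -/
def RE (S : Set (List Bool)) : Prop :=
  ∃ e : ℕ → Option (List Bool), Computable e ∧ S = {x | ∃ n, e n = some x}

/-!
Let `U = ⟦S⟧`. We build `α` bit by bit, keeping `μ (U ∩ [σ]) < 2⁻¹ ^ |σ|` for every prefix `σ`.
Initially this is `μ U < 1`, and since `[σ]` splits into `[σ ++ [false]]` and `[σ ++ [true]]`,
one of the two extensions `τ` keeps the inequality. Such a `τ` can be recognised effectively:
`μ (U ∩ [τ]) = μ U - μ (U \ [τ])`, the computable approximations `g k` bound `μ U` from above,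
and the finite stages of the enumeration of `S` bound `μ (U \ [τ])` from below by dyadic
rationals obtained by counting strings. As the inequality is strict, it is eventually
witnessed, so an unbounded search always succeeds. Finally, a prefix `x` of `α` lying in `S`
would give `[x] ⊆ U`, hence `μ (U ∩ [x]) = 2⁻¹ ^ |x|`.
-/

open Encodable Denumerable

/-! ### Computable arithmetic on ℤ and ℚ -/

theorem Nat.coprime_iff_forall_lt (a b : ℕ) :
    Nat.Coprime a b ↔ ∀ k < a + b + 2, k ∣ a → k ∣ b → k = 1 := by
  refine ⟨fun h k _ hka hkb => Nat.eq_one_of_dvd_coprimes h hka hkb,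
    fun h => h _ ?_ (Nat.gcd_dvd_left a b) (Nat.gcd_dvd_right a b)⟩
  rcases Nat.eq_zero_or_pos a with rfl | ha
  · simp
  · have := Nat.gcd_le_left b ha; omega

theorem Int.encode_natCast (n : ℕ) : encode (n : ℤ) = 2 * n := rfl

theorem Int.encode_negSucc (n : ℕ) : encode (Int.negSucc n) = 2 * n + 1 := rfl

namespace Primrec

theorem nat_pow : Primrec₂ ((· ^ ·) : ℕ → ℕ → ℕ) :=
  Primrec₂.unpaired'.1 Nat.Primrec.pow

theorem int_toNat : Primrec Int.toNat :=
  ((Primrec.cond Primrec.nat_bodd (Primrec.const 0) Primrec.nat_div2).comp Primrec.encode).of_eq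
    fun z => by cases z <;> simp [Int.encode_natCast, Int.encode_negSucc, Nat.div2_val]

theorem int_toNat_neg : Primrec fun z : ℤ => (-z).toNat :=
  ((Primrec.cond Primrec.nat_bodd (Primrec.succ.comp Primrec.nat_div2) (Primrec.const 0)).comp
    Primrec.encode).of_eq
    fun z => by cases z <;> simp [Int.encode_natCast, Int.encode_negSucc, Nat.div2_val]

theorem int_natAbs : Primrec Int.natAbs :=
  (Primrec.nat_add.comp int_toNat int_toNat_neg).of_eq fun z => by omega

theorem nat_count {p : ℕ → Prop} [DecidablePred p] (hp : PrimrecPred p) :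
    Primrec (Nat.count p) :=
  (list_length.comp ((listFilter hp).comp list_range)).of_eq fun n => by
    simp [Nat.count, List.countP_eq_length_filter]

theorem nat_dvd : PrimrecRel (· ∣ · : ℕ → ℕ → Prop) :=
  (Primrec.eq.comp (Primrec.nat_mod.comp .snd .fst) (.const 0)).of_eq fun p => by
    simp [Nat.dvd_iff_mod_eq_zero]

theorem nat_coprime : PrimrecRel Nat.Coprime := by
  have hdiv : PrimrecRel fun (k : ℕ) (p : ℕ × ℕ) => k ∣ p.1 → k ∣ p.2 → k = 1 :=
    (nat_dvd.comp .fst (Primrec.fst.comp .snd)).not.or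
      ((nat_dvd.comp .fst (Primrec.snd.comp .snd)).not.or
        (Primrec.eq.comp .fst (.const 1))) |>.of_eq fun _ => by tauto
  exact (hdiv.forall_mem_list.comp (Primrec.list_range.comp
    (Primrec.nat_add.comp (Primrec.nat_add.comp .fst .snd) (.const 2))) .id).of_eq
    fun p => by simp [Nat.coprime_iff_forall_lt p.1 p.2]

end Primrec

theorem Computable.nat_nth {p : ℕ → Prop} [DecidablePred p] (hp : PrimrecPred p)
    (hinf : (Set.ofPred p).Infinite) : Computable (Nat.nth p) := by
  have hex : ∀ n, ∃ m, p m ∧ Nat.count p m = n := fun n =>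
    ⟨_, Nat.nth_mem_of_infinite hinf n, Nat.count_nth_of_infinite hinf n⟩
  have hfind : PrimrecPred fun q : ℕ × ℕ => p q.2 ∧ Nat.count p q.2 = q.1 :=
    (hp.comp .snd).and (Primrec.eq.comp ((Primrec.nat_count hp).comp .snd) .fst)
  refine (Computable.find hfind.computablePred hex).of_eq fun n => ?_
  have hspec := Nat.find_spec (hex n)
  exact Nat.count_injective hspec.1 (Nat.nth_mem_of_infinite hinf n)
    (hspec.2.trans (Nat.count_nth_of_infinite hinf n).symm)

theorem Denumerable.encode_ofEncodableOfInfinite (α : Type*) [Encodable α] [Infinite α] (a : α) :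
    letI := decidableRangeEncode α
    @encode α (ofEncodableOfInfinite α).toEncodable a =
      Nat.count (· ∈ Set.range (encode : α → ℕ)) (encode a) :=
  rfl

theorem Denumerable.computable_encode_ofEncodableOfInfinite {α : Type*} [Encodable α] [Infinite α]
    (hrange : PrimrecPred (· ∈ Set.range (encode : α → ℕ))) :
    @Computable α ℕ (@Primcodable.ofDenumerable α (ofEncodableOfInfinite α)) _ encode := by
  let := decidableRangeEncode α
  let := ofEncodableOfInfinite α
  have hinf : (Set.range (encode : α → ℕ)).Infinite :=
    Set.infinite_range_of_injective encode_injective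
  refine ((Computable.nat_nth hrange hinf).comp Computable.encode).of_eq fun a => ?_
  rw [encode_ofEncodableOfInfinite]
  exact Nat.nth_count ⟨a, rfl⟩

theorem Rat.encode_eq (q : ℚ) : encode q = Nat.pair (encode q.num) q.den := rfl

theorem Rat.mem_range_encode_iff (m : ℕ) :
    m ∈ Set.range (encode : ℚ → ℕ) ↔
      0 < m.unpair.2 ∧ Nat.Coprime (ofNat ℤ m.unpair.1).natAbs m.unpair.2 := by
  constructor
  · rintro ⟨q, rfl⟩
    simp only [Rat.encode_eq, Nat.unpair_pair, ofNat_encode]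
    exact ⟨q.pos, q.reduced⟩
  · rintro ⟨hpos, hcop⟩
    refine ⟨⟨ofNat ℤ m.unpair.1, m.unpair.2, hpos.ne', hcop⟩, ?_⟩
    rw [Rat.encode_eq, encode_ofNat, Nat.pair_unpair]

-- Here `encode` is the code `pair (encode q.num) q.den` of `Encodable ℚ`. The `Primcodable ℚ`
-- instance codes `q` instead by the rank of this number among all such codes.
theorem Rat.computable_encode : Computable (encode : ℚ → ℕ) :=
  Denumerable.computable_encode_ofEncodableOfInfinite <|
    ((Primrec.nat_lt.comp (.const 0) (Primrec.snd.comp .unpair)).and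
      (Primrec.nat_coprime.comp
        (Primrec.int_natAbs.comp ((Primrec.ofNat ℤ).comp (Primrec.fst.comp .unpair)))
        (Primrec.snd.comp .unpair))).of_eq fun m => (Rat.mem_range_encode_iff m).symm

theorem Rat.computable_num : Computable Rat.num :=
  ((Computable.ofNat ℤ).comp (Computable.fst.comp (Computable.unpair.comp computable_encode))).of_eq
    fun q => by simp only [Rat.encode_eq, Nat.unpair_pair, ofNat_encode]

theorem Rat.computable_den : Computable Rat.den :=
  (Computable.snd.comp (Computable.unpair.comp computable_encode)).of_eq
    fun q => by simp [Rat.encode_eq]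

theorem Rat.mul_add_lt_natCast_iff (q : ℚ) (D A B : ℕ) :
    q * D + A < B ↔ q.num.toNat * D + A * q.den < B * q.den + (-q.num).toNat * D := by
  have hden : (0 : ℚ) < q.den := by exact_mod_cast q.pos
  have hnum : (q.num : ℚ) = q.num.toNat - (-q.num).toNat := by
    exact_mod_cast (Int.toNat_sub_toNat_neg q.num).symm
  rw [← mul_lt_mul_iff_of_pos_right hden, ← Nat.cast_lt (α := ℚ)]
  push_cast
  rw [add_mul, mul_right_comm, Rat.mul_den_eq_num, hnum]
  constructor <;> intro h <;> linarith

theorem Rat.computablePred_mul_add_lt :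
    ComputablePred fun t : ℚ × ℕ × ℕ × ℕ => t.1 * t.2.1 + t.2.2.1 < t.2.2.2 := by
  have hnum := Rat.computable_num.comp Computable.fst (α := ℚ × ℕ × ℕ × ℕ)
  have hden := Rat.computable_den.comp Computable.fst (α := ℚ × ℕ × ℕ × ℕ)
  have hD : Computable fun t : ℚ × ℕ × ℕ × ℕ => t.2.1 := Computable.fst.comp .snd
  have hA : Computable fun t : ℚ × ℕ × ℕ × ℕ => t.2.2.1 :=
    Computable.fst.comp (Computable.snd.comp .snd)
  have hB : Computable fun t : ℚ × ℕ × ℕ × ℕ => t.2.2.2 :=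
    Computable.snd.comp (Computable.snd.comp .snd)
  have hlhs := (Primrec.nat_add.to_comp.comp (Primrec.nat_mul.to_comp.comp
      (Primrec.int_toNat.to_comp.comp hnum) hD) (Primrec.nat_mul.to_comp.comp hA hden))
  have hrhs := (Primrec.nat_add.to_comp.comp (Primrec.nat_mul.to_comp.comp hB hden)
      (Primrec.nat_mul.to_comp.comp (Primrec.int_toNat_neg.to_comp.comp hnum) hD))
  exact Computable.computablePred <| (Primrec.nat_lt.decide.to_comp.comp hlhs hrhs).of_eq
    fun t => by simp only [Rat.mul_add_lt_natCast_iff]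

theorem ComputablePred.comp {α β : Type*} [Primcodable α] [Primcodable β] {p : β → Prop}
    {f : α → β} (hp : ComputablePred p) (hf : Computable f) : ComputablePred fun a => p (f a) := by
  classical
  exact Computable.computablePred (hp.decide.comp hf)

theorem Primrec.list_isPrefix {α : Type*} [Primcodable α] [DecidableEq α] :
    PrimrecRel (@List.IsPrefix α) :=
  (Primrec.eq.comp (Primrec.list_take.comp (Primrec.list_length.comp .fst) .snd) .fst).of_eq
    fun _ => (List.prefix_iff_eq_take.trans eq_comm).symm

/-! ### Cylinders and their measure -/

theorem mem_cylinder_iff {x : List Bool} {α : ℕ → Bool} :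
    α ∈ cylinder x ↔ (List.range x.length).map α = x := by
  refine ⟨fun h => List.ext_getElem (by simp) fun i _ hi => by simpa using h ⟨i, hi⟩,
    fun h i => by simp [List.getElem_of_eq h.symm]⟩

theorem mem_cylinder_iff_prefix {x : List Bool} {L : ℕ} (h : x.length ≤ L) {α : ℕ → Bool} :
    α ∈ cylinder x ↔ x <+: (List.range L).map α := by
  rw [mem_cylinder_iff, List.prefix_iff_eq_take, ← List.map_take, List.take_range,
    min_eq_left h, eq_comm]

theorem cylinder_subset_of_prefix {x y : List Bool} (h : x <+: y) : cylinder y ⊆ cylinder x :=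
  fun α hα => by rwa [mem_cylinder_iff_prefix h.length_le, mem_cylinder_iff.1 hα]

theorem cylinder_nil : cylinder [] = Set.univ :=
  Set.eq_univ_of_forall fun _ i => i.elim0

theorem cylinder_eq_union_append (σ : List Bool) :
    cylinder σ = cylinder (σ ++ [false]) ∪ cylinder (σ ++ [true]) := by
  refine subset_antisymm (fun α hα => ?_) (Set.union_subset
    (cylinder_subset_of_prefix (List.prefix_append _ _))
    (cylinder_subset_of_prefix (List.prefix_append _ _)))
  have hext : α ∈ cylinder (σ ++ [α σ.length]) := by
    rw [mem_cylinder_iff, List.length_append, List.length_singleton, List.range_succ,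
      List.map_append, mem_cylinder_iff.1 hα, List.map_singleton]
  cases h : α σ.length
  · exact Or.inl (h ▸ hext)
  · exact Or.inr (h ▸ hext)

theorem disjoint_cylinder {x y : List Bool} (hlen : x.length = y.length) (hne : x ≠ y) :
    Disjoint (cylinder x) (cylinder y) :=
  Set.disjoint_left.2 fun α hx hy => hne <| by
    rw [mem_cylinder_iff] at hx hy
    rw [← hx, ← hy, hlen]

theorem mem_openOf {S : Set (List Bool)} {α : ℕ → Bool} :
    α ∈ openOf S ↔ ∃ x ∈ S, α ∈ cylinder x := by
  simp [openOf]

theorem openOf_mono {S T : Set (List Bool)} (h : S ⊆ T) : openOf S ⊆ openOf T :=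
  Set.biUnion_subset_biUnion_left h

theorem measurableSet_cylinder (x : List Bool) : MeasurableSet (cylinder x) := by
  have : cylinder x = ⋂ i : Fin x.length, (fun α : ℕ → Bool => α i) ⁻¹' {x.get i} := by
    ext; simp [_root_.cylinder]
  rw [this]
  exact MeasurableSet.iInter fun i => measurable_pi_apply _ (measurableSet_singleton _)

theorem measurableSet_openOf (S : Set (List Bool)) : MeasurableSet (openOf S) :=
  .biUnion S.to_countable fun x _ => measurableSet_cylinder x

def stringsOfLength : ℕ → List (List Bool)
  | 0 => [[]]
  | L + 1 => [false, true].flatMap fun b => (stringsOfLength L).map (b :: ·)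

theorem mem_stringsOfLength {L : ℕ} {ρ : List Bool} : ρ ∈ stringsOfLength L ↔ ρ.length = L := by
  induction L generalizing ρ with
  | zero => simp [stringsOfLength]
  | succ L ih =>
    rcases ρ with _ | ⟨b, ρ⟩
    · simp [stringsOfLength]
    · cases b <;> simp [stringsOfLength, ih]

theorem nodup_stringsOfLength (L : ℕ) : (stringsOfLength L).Nodup := by
  induction L with
  | zero => simp [stringsOfLength]
  | succ L ih =>
    refine List.nodup_flatMap.2 ⟨fun b _ => ih.map (List.cons_injective), ?_⟩
    simp [List.disjoint_left]

theorem primrec_stringsOfLength : Primrec stringsOfLength := by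
  have hcons : Primrec₂ fun (p : (ℕ × List (List Bool)) × Bool) (ρ : List Bool) => p.2 :: ρ :=
    Primrec.list_cons.comp (Primrec.snd.comp .fst) .snd
  have hmap : Primrec₂ fun (p : ℕ × List (List Bool)) (b : Bool) => p.2.map (b :: ·) :=
    Primrec.list_map (Primrec.snd.comp .fst) hcons
  have hstep : Primrec₂ fun (_ : ℕ) (l : List (List Bool)) =>
      [false, true].flatMap fun b => l.map (b :: ·) :=
    Primrec.list_flatMap (.const _) hmap
  refine (Primrec.nat_rec₁ [[]] hstep).of_eq fun L => ?_
  induction L with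
  | zero => rfl
  | succ L ih => simp only [stringsOfLength, ← ih]

def diffCount (F : List (List Bool)) (τ : List Bool) (L : ℕ) : ℕ :=
  ((stringsOfLength L).filter fun ρ => (∃ x ∈ F, x <+: ρ) ∧ ¬ τ <+: ρ).length

theorem openOf_diff_cylinder_eq_biUnion {F : List (List Bool)} {τ : List Bool} {L : ℕ}
    (hF : ∀ x ∈ F, x.length ≤ L) (hτ : τ.length ≤ L) :
    openOf {x | x ∈ F} \ cylinder τ =
      ⋃ ρ ∈ (stringsOfLength L).filter (fun ρ => (∃ x ∈ F, x <+: ρ) ∧ ¬ τ <+: ρ),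
        cylinder ρ := by
  ext α
  simp only [Set.mem_sdiff, mem_openOf, Set.mem_ofPred_eq, Set.mem_iUnion, List.mem_filter,
    mem_stringsOfLength, decide_eq_true_eq, exists_prop]
  constructor
  · rintro ⟨⟨x, hx, hαx⟩, hατ⟩
    refine ⟨(List.range L).map α, ⟨by simp, ⟨x, hx, ?_⟩, ?_⟩, ?_⟩
    · exact (mem_cylinder_iff_prefix (hF x hx)).1 hαx
    · exact fun h => hατ ((mem_cylinder_iff_prefix hτ).2 h)
    · rw [mem_cylinder_iff, List.length_map, List.length_range]
  · rintro ⟨ρ, ⟨hρL, ⟨x, hx, hxρ⟩, hτρ⟩, hαρ⟩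
    have hρ : (List.range L).map α = ρ := hρL ▸ mem_cylinder_iff.1 hαρ
    refine ⟨⟨x, hx, (mem_cylinder_iff_prefix (hF x hx)).2 (hρ ▸ hxρ)⟩, fun h => hτρ ?_⟩
    exact hρ ▸ (mem_cylinder_iff_prefix hτ).1 h

theorem primrec_diffCount :
    Primrec fun p : (List (List Bool) × List Bool) × ℕ => diffCount p.1.1 p.1.2 p.2 := by
  have hR : PrimrecRel fun (ρ : List Bool) (p : (List (List Bool) × List Bool) × ℕ) =>
      (∃ x ∈ p.1.1, x <+: ρ) ∧ ¬ p.1.2 <+: ρ :=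
    (Primrec.list_isPrefix.exists_mem_list.comp (Primrec.fst.comp (Primrec.fst.comp .snd))
      .fst).and (Primrec.list_isPrefix.comp (Primrec.snd.comp (Primrec.fst.comp .snd)) .fst).not
  exact Primrec.list_length.comp (hR.listFilter.comp (primrec_stringsOfLength.comp .snd) .id)

section Measure

variable {μ : Measure (ℕ → Bool)}

theorem measureReal_cylinder (hμ : ∀ x, μ (cylinder x) = (1 / 2 : ENNReal) ^ x.length)
    (x : List Bool) : μ.real (cylinder x) = 2⁻¹ ^ x.length := by
  simp [measureReal_def, hμ]

variable [IsFiniteMeasure μ]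

theorem measureReal_inter_cylinder {A : Set (ℕ → Bool)} (hA : MeasurableSet A) (σ : List Bool) :
    μ.real (A ∩ cylinder σ) =
      μ.real (A ∩ cylinder (σ ++ [false])) + μ.real (A ∩ cylinder (σ ++ [true])) := by
  rw [cylinder_eq_union_append, Set.inter_union_distrib_left]
  exact measureReal_union (.mono Set.inter_subset_right Set.inter_subset_right
    (disjoint_cylinder (by simp) (by simp))) (hA.inter (measurableSet_cylinder _))

theorem measureReal_biUnion_cylinder
    (hμ : ∀ x, μ (cylinder x) = (1 / 2 : ENNReal) ^ x.length) {L : ℕ}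
    {l : List (List Bool)} (hl : l.Nodup) (hlen : ∀ ρ ∈ l, ρ.length = L) :
    μ.real (⋃ ρ ∈ l, cylinder ρ) = l.length * 2⁻¹ ^ L := by
  have hdisj : Set.PairwiseDisjoint (↑l.toFinset) cylinder := fun x hx y hy hne =>
    disjoint_cylinder (by rw [hlen x (by simpa using hx), hlen y (by simpa using hy)]) hne
  have := measureReal_biUnion_finset (μ := μ) hdisj fun x _ => measurableSet_cylinder x
  simp only [List.mem_toFinset] at this
  rw [this, Finset.sum_congr rfl fun ρ hρ => by
    rw [measureReal_cylinder hμ, hlen ρ (List.mem_toFinset.1 hρ)]]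
  simp [List.toFinset_card_of_nodup hl]

theorem measureReal_openOf_diff_cylinder
    (hμ : ∀ x, μ (cylinder x) = (1 / 2 : ENNReal) ^ x.length) {F : List (List Bool)}
    {τ : List Bool} {L : ℕ} (hF : ∀ x ∈ F, x.length ≤ L) (hτ : τ.length ≤ L) :
    μ.real (openOf {x | x ∈ F} \ cylinder τ) = diffCount F τ L * 2⁻¹ ^ L := by
  rw [openOf_diff_cylinder_eq_biUnion hF hτ, diffCount]
  exact measureReal_biUnion_cylinder hμ ((nodup_stringsOfLength L).filter _)
    fun ρ hρ => mem_stringsOfLength.1 (List.mem_filter.1 hρ).1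

end Measure

theorem exists_measureReal_iUnion_lt_add {Ω : Type*} [MeasurableSpace Ω] {μ : Measure Ω}
    [IsFiniteMeasure μ] {A : ℕ → Set Ω} (hA : Monotone A) {ε : ℝ} (hε : 0 < ε) :
    ∃ N, μ.real (⋃ n, A n) < μ.real (A N) + ε := by
  have h := (ENNReal.tendsto_toReal (measure_ne_top μ _)).comp (tendsto_measure_iUnion_atTop hA)
  obtain ⟨N, hN⟩ := (h.eventually_const_lt (sub_lt_self _ hε)).exists
  exact ⟨N, by simp only [Function.comp_apply] at hN; simp only [measureReal_def]; linarith⟩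

/-! ### Effective search along a binary tree -/

section Search

variable (f : List Bool → ℕ → Option Bool)

-- `false` is a junk value, taken only when the search diverges.
open Classical in
noncomputable def searchBit (σ : List Bool) : Bool :=
  (Nat.rfindOpt (f σ)).getOrElse false

noncomputable def searchPrefix : ℕ → List Bool
  | 0 => []
  | n + 1 => searchPrefix n ++ [searchBit f (searchPrefix n)]

variable {f}

theorem searchBit_mem {σ : List Bool} (h : ∃ m b, f σ m = some b) :
    searchBit f σ ∈ Nat.rfindOpt (f σ) := by
  classical
  have hdom : (Nat.rfindOpt (f σ)).Dom := Nat.rfindOpt_dom.2 h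
  rw [searchBit, Part.getOrElse_of_dom _ hdom]
  exact Part.get_mem hdom

theorem map_range_searchBit_searchPrefix (n : ℕ) :
    (List.range n).map (fun i => searchBit f (searchPrefix f i)) = searchPrefix f n := by
  induction n with
  | zero => rfl
  | succ n ih => rw [List.range_succ, List.map_append, ih]; rfl

theorem computable_searchPrefix (hf : Computable₂ f)
    (hdom : ∀ n, ∃ m b, f (searchPrefix f n) m = some b) : Computable (searchPrefix f) := by
  have hsearch : Partrec fun x : ℕ × ℕ × List Bool => Nat.rfindOpt (f x.2.2) :=
    Partrec.rfindOpt (hf.comp (Computable.snd.comp (Computable.snd.comp .fst)) .snd).to₂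
  have hstep : Partrec fun x : ℕ × ℕ × List Bool =>
      (Nat.rfindOpt (f x.2.2)).map (x.2.2 ++ [·]) :=
    hsearch.map
      (Computable.list_concat.comp (Computable.snd.comp (Computable.snd.comp .fst)) .snd).to₂
  refine (Partrec.nat_rec .id (Computable.const []).partrec hstep.to₂).of_eq_tot fun n => ?_
  induction n with
  | zero => exact Part.mem_some _
  | succ n ih =>
    exact Part.mem_bind_iff.2 ⟨_, ih, Part.mem_map_iff _ |>.2 ⟨_, searchBit_mem (hdom n), rfl⟩⟩

theorem exists_computable_of_search (hf : Computable₂ f) (I : List Bool → Prop) (h0 : I [])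
    (hdom : ∀ σ, I σ → ∃ m b, f σ m = some b)
    (hstep : ∀ σ m b, I σ → f σ m = some b → I (σ ++ [b])) :
    ∃ α : ℕ → Bool, Computable α ∧ ∀ n, I ((List.range n).map α) := by
  have hI : ∀ n, I (searchPrefix f n) := fun n => by
    induction n with
    | zero => exact h0
    | succ n ih =>
      obtain ⟨m, hm⟩ := Nat.rfindOpt_spec (searchBit_mem (hdom _ ih))
      exact hstep _ m _ ih hm
  have hprefix := computable_searchPrefix hf fun n => hdom _ (hI n)
  refine ⟨fun n => searchBit f (searchPrefix f n), ?_, fun n => ?_⟩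
  · exact (Partrec.rfindOpt (hf.comp (hprefix.comp .fst) .snd).to₂).of_eq_tot fun n =>
      searchBit_mem (hdom _ (hI n))
  · rw [map_range_searchBit_searchPrefix]
    exact hI n

end Search

/-! ### Certified extensions -/

def enumUpTo (e : ℕ → Option (List Bool)) (N : ℕ) : List (List Bool) :=
  (List.range N).filterMap e

theorem computable_enumUpTo {e : ℕ → Option (List Bool)} (he : Computable e) :
    Computable (enumUpTo e) := by
  have hstep : Computable₂ fun (_ : ℕ) (p : ℕ × List (List Bool)) => p.2 ++ (e p.1).toList :=
    (Computable.list_append.comp (Computable.snd.comp .snd)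
      (Primrec.optionToList.to_comp.comp (he.comp (Computable.fst.comp .snd)))).to₂
  refine (Computable.nat_rec .id (.const []) hstep).of_eq fun N => ?_
  induction N with
  | zero => rfl
  | succ N ih =>
    simp only [id, enumUpTo, List.range_succ, List.filterMap_append] at ih ⊢
    rw [← ih]
    cases h : e N <;> simp [h]

theorem openOf_eq_iUnion_enumUpTo (e : ℕ → Option (List Bool)) :
    openOf {x | ∃ n, e n = some x} = ⋃ N, openOf {x | x ∈ enumUpTo e N} := by
  ext α
  simp only [mem_openOf, Set.mem_iUnion, Set.mem_ofPred_eq, enumUpTo, List.mem_filterMap,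
    List.mem_range]
  constructor
  · rintro ⟨x, ⟨n, hn⟩, hαx⟩
    exact ⟨n + 1, x, ⟨n, n.lt_succ_self, hn⟩, hαx⟩
  · rintro ⟨N, x, ⟨n, -, hn⟩, hαx⟩
    exact ⟨x, ⟨n, hn⟩, hαx⟩

theorem monotone_openOf_enumUpTo (e : ℕ → Option (List Bool)) :
    Monotone fun N => openOf {x | x ∈ enumUpTo e N} := fun M N hMN =>
  openOf_mono fun x hx => by
    obtain ⟨n, hn, hx⟩ := List.mem_filterMap.1 hx
    exact List.mem_filterMap.2 ⟨n, List.mem_range.2 ((List.mem_range.1 hn).trans_le hMN), hx⟩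

theorem openOf_enumUpTo_subset (e : ℕ → Option (List Bool)) (N : ℕ) :
    openOf {x | x ∈ enumUpTo e N} ⊆ openOf {x | ∃ n, e n = some x} := by
  rw [openOf_eq_iUnion_enumUpTo]
  exact Set.subset_iUnion (fun N => openOf {x | x ∈ enumUpTo e N}) N

theorem two_inv_pow_add_lt_iff (x c : ℝ) (L k n : ℕ) :
    x + 2⁻¹ ^ k < c * 2⁻¹ ^ L + 2⁻¹ ^ n ↔
      x * 2 ^ (L + k + n) + 2 ^ (L + n) < c * 2 ^ (k + n) + 2 ^ (L + k) := by
  rw [← mul_lt_mul_iff_of_pos_right (pow_pos two_pos (L + k + n))]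
  simp only [pow_add, add_mul, inv_pow]
  field_simp

section Certificate

-- `w = (b, N, k)`: the bit `b` extending `σ`, the enumeration stage `N` and the precision `k`.
def IsCertificate (μ : Measure (ℕ → Bool)) (g : ℕ → ℚ) (e : ℕ → Option (List Bool))
    (σ : List Bool) (w : Bool × ℕ × ℕ) : Prop :=
  (g w.2.2 : ℝ) + 2⁻¹ ^ w.2.2 <
    μ.real (openOf {x | x ∈ enumUpTo e w.2.1} \ cylinder (σ ++ [w.1])) + 2⁻¹ ^ (σ.length + 1)

open Classical in
noncomputable def certifiedBit (μ : Measure (ℕ → Bool)) (g : ℕ → ℚ) (e : ℕ → Option (List Bool))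
    (σ : List Bool) (m : ℕ) : Option Bool :=
  (decode (α := Bool × ℕ × ℕ) m).bind fun w =>
    if IsCertificate μ g e σ w then some w.1 else none

variable {μ : Measure (ℕ → Bool)} [IsFiniteMeasure μ] {g : ℕ → ℚ} {e : ℕ → Option (List Bool)}

theorem measureReal_inter_cylinder_lt_of_isCertificate
    (happrox : ∀ k, |μ.real (openOf {x | ∃ n, e n = some x}) - g k| < 2⁻¹ ^ k)
    {σ : List Bool} {w : Bool × ℕ × ℕ} (hw : IsCertificate μ g e σ w) :
    μ.real (openOf {x | ∃ n, e n = some x} ∩ cylinder (σ ++ [w.1])) <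
      2⁻¹ ^ (σ ++ [w.1]).length := by
  obtain ⟨b, N, k⟩ := w
  have hmono : μ.real (openOf {x | x ∈ enumUpTo e N} \ cylinder (σ ++ [b])) ≤
      μ.real (openOf {x | ∃ n, e n = some x} \ cylinder (σ ++ [b])) :=
    measureReal_mono (Set.sdiff_subset_sdiff_left (openOf_enumUpTo_subset e N))
  have hsplit := measureReal_inter_add_sdiff (μ := μ) (s := openOf {x | ∃ n, e n = some x})
    (measurableSet_cylinder (σ ++ [b]))
  have hgk := (abs_sub_lt_iff.1 (happrox k)).1
  unfold IsCertificate at hw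
  rw [List.length_append, List.length_singleton]
  linarith

theorem exists_isCertificate
    (happrox : ∀ k, |μ.real (openOf {x | ∃ n, e n = some x}) - g k| < 2⁻¹ ^ k) {σ : List Bool}
    (hσ : μ.real (openOf {x | ∃ n, e n = some x} ∩ cylinder σ) < 2⁻¹ ^ σ.length) :
    ∃ w, IsCertificate μ g e σ w := by
  set U := openOf {x | ∃ n, e n = some x} with hU
  obtain ⟨b, hb⟩ : ∃ b : Bool, μ.real (U ∩ cylinder (σ ++ [b])) < 2⁻¹ ^ (σ.length + 1) := by
    by_contra! h
    have := measureReal_inter_cylinder (μ := μ) (A := U) (measurableSet_openOf _) σ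
    have := h false
    have := h true
    rw [pow_succ] at *
    linarith
  set δ := 2⁻¹ ^ (σ.length + 1) - μ.real (U ∩ cylinder (σ ++ [b])) with hδdef
  have hδ : 0 < δ := sub_pos.2 hb
  -- `δ` absorbs `2 * 2⁻¹ ^ k < δ / 2` from `g k` and `δ / 2` from the enumeration stage.
  obtain ⟨k, hk⟩ := exists_pow_lt_of_lt_one (div_pos hδ four_pos) (by norm_num : (2 : ℝ)⁻¹ < 1)
  obtain ⟨N, hN⟩ := exists_measureReal_iUnion_lt_add (μ := μ)
    (fun M N hMN => Set.sdiff_subset_sdiff_left (t := cylinder (σ ++ [b]))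
      (monotone_openOf_enumUpTo e hMN)) (half_pos hδ)
  rw [← Set.iUnion_sdiff, ← openOf_eq_iUnion_enumUpTo, ← hU] at hN
  dsimp only at hN
  have hsplit := measureReal_inter_add_sdiff (μ := μ) (s := U) (measurableSet_cylinder (σ ++ [b]))
  have hgk := (abs_sub_lt_iff.1 (happrox k)).2
  refine ⟨(b, N, k), ?_⟩
  unfold IsCertificate
  dsimp only
  linarith

theorem isCertificate_iff (hμ : ∀ x, μ (cylinder x) = (1 / 2 : ENNReal) ^ x.length)
    {σ : List Bool} {b : Bool} {N k L : ℕ} (hF : ∀ x ∈ enumUpTo e N, x.length ≤ L)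
    (hσ : σ.length + 1 ≤ L) :
    IsCertificate μ g e σ (b, N, k) ↔
      g k * (2 ^ (L + k + (σ.length + 1)) : ℕ) + (2 ^ (L + (σ.length + 1)) : ℕ) <
        (diffCount (enumUpTo e N) (σ ++ [b]) L * 2 ^ (k + (σ.length + 1)) + 2 ^ (L + k) : ℕ) := by
  rw [IsCertificate, measureReal_openOf_diff_cylinder hμ hF (by simpa using hσ),
    two_inv_pow_add_lt_iff, ← Rat.cast_lt (K := ℝ)]
  push_cast
  rfl

theorem computablePred_isCertificate (hμ : ∀ x, μ (cylinder x) = (1 / 2 : ENNReal) ^ x.length)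
    (hg : Computable g) (he : Computable e) :
    ComputablePred fun p : List Bool × Bool × ℕ × ℕ => IsCertificate μ g e p.1 p.2 := by
  have hσ : Computable fun p : List Bool × Bool × ℕ × ℕ => p.1 := .fst
  have hb : Computable fun p : List Bool × Bool × ℕ × ℕ => p.2.1 := Computable.fst.comp .snd
  have hk : Computable fun p : List Bool × Bool × ℕ × ℕ => p.2.2.2 :=
    Computable.snd.comp (Computable.snd.comp .snd)
  have hF : Computable fun p : List Bool × Bool × ℕ × ℕ => enumUpTo e p.2.2.1 :=
    (computable_enumUpTo he).comp (Computable.fst.comp (Computable.snd.comp .snd))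
  have hn : Computable fun p : List Bool × Bool × ℕ × ℕ => p.1.length + 1 :=
    Computable.succ.comp (Computable.list_length.comp hσ)
  have hL : Computable fun p : List Bool × Bool × ℕ × ℕ =>
      (enumUpTo e p.2.2.1).flatten.length + (p.1.length + 1) :=
    Primrec.nat_add.to_comp.comp (Computable.list_length.comp
      (Primrec.list_flatten.to_comp.comp hF)) hn
  have hadd : ∀ {f f' : List Bool × Bool × ℕ × ℕ → ℕ}, Computable f → Computable f' →
      Computable fun p => f p + f' p := fun hf hf' => Primrec.nat_add.to_comp.comp hf hf'
  have hpow : ∀ {f : List Bool × Bool × ℕ × ℕ → ℕ}, Computable f →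
      Computable fun p => 2 ^ f p := fun hf => Primrec.nat_pow.to_comp.comp (.const 2) hf
  have hcount :=
    primrec_diffCount.to_comp.comp ((hF.pair (Computable.list_concat.comp hσ hb)).pair hL)
  have hB := hadd (Primrec.nat_mul.to_comp.comp hcount (hpow (hadd hk hn))) (hpow (hadd hL hk))
  have hdata := (hg.comp hk).pair ((hpow (hadd (hadd hL hk) hn)).pair ((hpow (hadd hL hn)).pair hB))
  refine (Rat.computablePred_mul_add_lt.comp hdata).of_eq fun p => (isCertificate_iff hμ
    (fun x hx => (List.sublist_flatten_of_mem hx).length_le.trans (Nat.le_add_right _ _))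
    (Nat.le_add_left _ _)).symm

theorem computable_certifiedBit (hμ : ∀ x, μ (cylinder x) = (1 / 2 : ENNReal) ^ x.length)
    (hg : Computable g) (he : Computable e) : Computable₂ (certifiedBit μ g e) := by
  classical
  have hcert := (computablePred_isCertificate hμ hg he).decide.comp
    ((Computable.fst.comp .fst).pair .snd (α := (List Bool × ℕ) × (Bool × ℕ × ℕ)))
  refine (Computable.option_bind (Computable.decode.comp .snd) (Computable.cond hcert
    (Computable.option_some.comp (Computable.fst.comp .snd)) (.const none)).to₂).of_eq
    fun p => by simp only [certifiedBit, Bool.cond_decide]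

theorem exists_certifiedBit_eq_some
    (happrox : ∀ k, |μ.real (openOf {x | ∃ n, e n = some x}) - g k| < 2⁻¹ ^ k) {σ : List Bool}
    (hσ : μ.real (openOf {x | ∃ n, e n = some x} ∩ cylinder σ) < 2⁻¹ ^ σ.length) :
    ∃ m b, certifiedBit μ g e σ m = some b := by
  obtain ⟨w, hw⟩ := exists_isCertificate happrox hσ
  exact ⟨encode w, w.1, by simp [certifiedBit, hw]⟩

theorem measureReal_inter_cylinder_lt_of_certifiedBit
    (happrox : ∀ k, |μ.real (openOf {x | ∃ n, e n = some x}) - g k| < 2⁻¹ ^ k) {σ : List Bool}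
    {m : ℕ} {b : Bool} (h : certifiedBit μ g e σ m = some b) :
    μ.real (openOf {x | ∃ n, e n = some x} ∩ cylinder (σ ++ [b])) < 2⁻¹ ^ (σ ++ [b]).length := by
  obtain ⟨w, -, hw⟩ := Option.bind_eq_some_iff.1 h
  split_ifs at hw with hcert
  obtain rfl := Option.some_inj.1 hw
  exact measureReal_inter_cylinder_lt_of_isCertificate happrox hcert

end Certificate

/-- If `S` is r.e., `μ ⟦S⟧ < 1`, and `μ ⟦S⟧` is a computable real, then there is a
computable infinite binary sequence not in `⟦S⟧`. -/
theorem stmt_13 (μ : Measure (ℕ → Bool)) [IsProbabilityMeasure μ]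
    (hμ : ∀ x : List Bool, μ (cylinder x) = (1 / 2 : ENNReal) ^ x.length)
    (S : Set (List Bool)) (hre : RE S)
    (hlt : μ (openOf S) < 1)
    (hcomp : ∃ g : ℕ → ℚ, Computable g ∧
      ∀ k : ℕ, |(μ (openOf S)).toReal - (g k : ℝ)| < (2 : ℝ)⁻¹ ^ k) :
    ∃ α : ℕ → Bool, Computable α ∧ α ∉ openOf S := by
  obtain ⟨e, he, rfl⟩ := hre
  obtain ⟨g, hg, happrox⟩ := hcomp
  have h0 : μ.real (openOf {x | ∃ n, e n = some x} ∩ cylinder []) < 2⁻¹ ^ 0 := by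
    rw [cylinder_nil, Set.inter_univ, pow_zero]
    exact (ENNReal.toReal_lt_toReal (measure_ne_top μ _) ENNReal.one_ne_top).2 hlt
  obtain ⟨α, hα, hprefix⟩ := exists_computable_of_search (computable_certifiedBit hμ hg he)
    (fun σ => μ.real (openOf {x | ∃ n, e n = some x} ∩ cylinder σ) < 2⁻¹ ^ σ.length) h0
    (fun _ => exists_certifiedBit_eq_some happrox)
    (fun _ _ _ _ => measureReal_inter_cylinder_lt_of_certifiedBit happrox)
  refine ⟨α, hα, fun hmem => ?_⟩
  obtain ⟨x, hx, hαx⟩ := mem_openOf.1 hmem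
  have hx_lt := hprefix x.length
  rw [mem_cylinder_iff.1 hαx, Set.inter_eq_right.2 fun β hβ => mem_openOf.2 ⟨x, hx, hβ⟩,
    measureReal_cylinder hμ] at hx_lt
  exact lt_irrefl _ hx_lt
end

section
/- Let {a_{m,n}} be a doubly indexed family of nonnegative reals, g: ℕ⁺ → ℕ⁺, and d: ℕ⁺ → ℕ with d(m) ≥ 2, such that a_{m,n} < 1/n^{d(m)} for all n ≥ g(m) and 2/g(m) ≤ 2^{−m}. Then for every k ∈ ℕ, Σ_{m=1}^{k} Σ_{n ≥ g(m)·2^k} a_{m,n} + Σ_{m=k+1}^∞ (Σ_{n ≥ g(m)} a_{m,n}) < 2^{−(k−1)}. -/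
/-!
For `n ≥ N ≥ 1` the terms are at most `1/n²`, so a tail `∑_{n ≥ N}` is at most `2/N`. A row
`m ≤ k` cut at `g(m)·2^k` thus contributes at most `2^{-m}·2^{-k}`, and a full row `m > k` at most
`2^{-m}`; the two geometric sums give `(1 - 2^{-k})·2^{-k} + 2^{-k} < 2^{1-k}`.
-/

open Finset

lemma summable_tail_inv_sq (N : ℕ) :
    Summable fun n : {n : ℕ // N ≤ n} => ((n : ℝ) ^ 2)⁻¹ :=
  (Real.summable_nat_pow_inv.mpr one_lt_two).subtype {n | N ≤ n}

lemma tsum_tail_inv_sq_le {N : ℕ} (hN : 0 < N) :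
    ∑' n : {n : ℕ // N ≤ n}, ((n : ℝ) ^ 2)⁻¹ ≤ 2 / N := by
  refine (summable_tail_inv_sq N).tsum_le_of_sum_le fun u => ?_
  set v := u.map (Function.Embedding.subtype _)
  obtain ⟨M, hM⟩ := v.exists_nat_subset_range
  have hsub : v ⊆ Ioo (N - 1) M := fun n hn => by
    obtain ⟨i, -, rfl⟩ := mem_map.mp hn
    have := i.2
    exact mem_Ioo.mpr ⟨by simp only [Function.Embedding.coe_subtype]; omega, mem_range.mp (hM hn)⟩
  calc ∑ n ∈ u, (((n : ℕ) : ℝ) ^ 2)⁻¹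
      = ∑ n ∈ v, ((n : ℝ) ^ 2)⁻¹ := by rw [sum_map]; rfl
    _ ≤ ∑ n ∈ Ioo (N - 1) M, ((n : ℝ) ^ 2)⁻¹ :=
      sum_le_sum_of_subset_of_nonneg hsub fun _ _ _ => by positivity
    _ ≤ 2 / ((N - 1 : ℕ) + 1 : ℝ) := sum_Ioo_inv_sq_le _ _
    _ = 2 / N := by rw [Nat.cast_sub hN, Nat.cast_one, sub_add_cancel]

lemma tsum_tail_le_of_le_inv_sq {b : ℕ → ℝ} (hb : ∀ n, 0 ≤ b n) {N : ℕ} (hN : 0 < N)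
    (hle : ∀ n, N ≤ n → b n ≤ ((n : ℝ) ^ 2)⁻¹) :
    ∑' n : {n : ℕ // N ≤ n}, b n ≤ 2 / N := by
  have hle' (n : {n : ℕ // N ≤ n}) : b n ≤ ((n : ℝ) ^ 2)⁻¹ := hle n n.2
  have hsummable :=
    (summable_tail_inv_sq N).of_nonneg_of_le (fun n : {n : ℕ // N ≤ n} => hb n) hle'
  exact (hsummable.tsum_le_tsum hle' (summable_tail_inv_sq N)).trans (tsum_tail_inv_sq_le hN)

lemma sum_Icc_inv_two_pow (k : ℕ) : ∑ m ∈ Icc 1 k, (2 : ℝ)⁻¹ ^ m = 1 - 2⁻¹ ^ k := by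
  induction k with
  | zero => simp
  | succ k ih => rw [sum_Icc_succ_top (by omega), ih]; ring

lemma summable_tail_inv_two_pow (k : ℕ) :
    Summable fun m : {m : ℕ // k ≤ m} => (2 : ℝ)⁻¹ ^ (m : ℕ) :=
  (summable_geometric_of_lt_one (by norm_num) (by norm_num)).subtype {m | k ≤ m}

lemma tsum_tail_inv_two_pow (k : ℕ) :
    ∑' m : {m : ℕ // k + 1 ≤ m}, (2 : ℝ)⁻¹ ^ (m : ℕ) = 2⁻¹ ^ k := by
  have h := tsum_subtype {m : ℕ | k + 1 ≤ m} fun m => (2 : ℝ)⁻¹ ^ m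
  simp only [Set.indicator_apply, Set.mem_ofPred_eq, tsum_geometric_inv_two_ge] at h
  exact h.trans (by ring)

lemma sum_Icc_tsum_tail_le {a : ℕ → ℕ → ℝ} {g : ℕ → ℕ} (ha : ∀ m n, 0 ≤ a m n)
    (hg : ∀ m, 0 < g m) (hsq : ∀ m n, g m ≤ n → a m n ≤ ((n : ℝ) ^ 2)⁻¹)
    (hgm : ∀ m, 1 ≤ m → (2 : ℝ) / g m ≤ 2⁻¹ ^ m) (k : ℕ) :
    ∑ m ∈ Icc 1 k, ∑' n : {n : ℕ // g m * 2 ^ k ≤ n}, a m n ≤ (1 - 2⁻¹ ^ k) * 2⁻¹ ^ k := by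
  rw [← sum_Icc_inv_two_pow, sum_mul]
  refine sum_le_sum fun m hm => ?_
  have hN : g m ≤ g m * 2 ^ k := Nat.le_mul_of_pos_right _ (by positivity)
  calc ∑' n : {n : ℕ // g m * 2 ^ k ≤ n}, a m n
      ≤ 2 / (g m * 2 ^ k : ℕ) :=
        tsum_tail_le_of_le_inv_sq (ha m) (Nat.mul_pos (hg m) (by positivity))
          fun n hn => hsq m n (hN.trans hn)
    _ = 2 / g m * 2⁻¹ ^ k := by
      rw [Nat.cast_mul, Nat.cast_pow, Nat.cast_ofNat, inv_pow, ← div_div,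
        div_eq_mul_inv _ (2 ^ k : ℝ)]
    _ ≤ 2⁻¹ ^ m * 2⁻¹ ^ k := by gcongr; exact hgm m (mem_Icc.mp hm).1

lemma tsum_tsum_tail_le {a : ℕ → ℕ → ℝ} {g : ℕ → ℕ} (ha : ∀ m n, 0 ≤ a m n)
    (hg : ∀ m, 0 < g m) (hsq : ∀ m n, g m ≤ n → a m n ≤ ((n : ℝ) ^ 2)⁻¹)
    (hgm : ∀ m, 1 ≤ m → (2 : ℝ) / g m ≤ 2⁻¹ ^ m) (k : ℕ) :
    ∑' m : {m : ℕ // k + 1 ≤ m}, ∑' n : {n : ℕ // g m ≤ n}, a m n ≤ 2⁻¹ ^ k := by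
  have hrow (m : {m : ℕ // k + 1 ≤ m}) : ∑' n : {n : ℕ // g m ≤ n}, a m n ≤ 2⁻¹ ^ (m : ℕ) :=
    (tsum_tail_le_of_le_inv_sq (ha m) (hg m) (hsq m)).trans (hgm m (by omega))
  have hrow_nonneg (m : {m : ℕ // k + 1 ≤ m}) : 0 ≤ ∑' n : {n : ℕ // g m ≤ n}, a m n :=
    tsum_nonneg fun n => ha m n
  have hsummable := (summable_tail_inv_two_pow (k + 1)).of_nonneg_of_le hrow_nonneg hrow
  exact (hsummable.tsum_le_tsum hrow (summable_tail_inv_two_pow (k + 1))).trans_eq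
    (tsum_tail_inv_two_pow k)

/-- The effective convergence estimate: if `a m n < 1/n^(d m)` for `n ≥ g m`, with
`d m ≥ 2` and `2/g(m) ≤ 2^(-m)`, then for every `k`,
`∑_{m=1}^{k} ∑_{n ≥ g(m)·2^k} a m n + ∑_{m ≥ k+1} ∑_{n ≥ g(m)} a m n < 2^{-(k-1)}`. -/
theorem stmt_17 (a : ℕ → ℕ → ℝ) (g : ℕ → ℕ) (d : ℕ → ℕ)
    (ha : ∀ m n, 0 ≤ a m n)
    (hd : ∀ m, 2 ≤ d m)
    (hg : ∀ m, 0 < g m)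
    (hbound : ∀ m n, g m ≤ n → a m n < 1 / (n : ℝ) ^ (d m))
    (hgm : ∀ m : ℕ, 1 ≤ m → (2 : ℝ) / (g m : ℝ) ≤ (2 : ℝ)⁻¹ ^ m)
    (k : ℕ) :
    (∑ m ∈ Finset.Icc 1 k, ∑' n : {n : ℕ // g m * 2 ^ k ≤ n}, a m (n : ℕ)) +
      (∑' m : {m : ℕ // k + 1 ≤ m}, ∑' n : {n : ℕ // g (m : ℕ) ≤ n}, a (m : ℕ) (n : ℕ)) <
    (2 : ℝ) ^ ((1 : ℤ) - (k : ℤ)) := by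
  have hsq (m n : ℕ) (hn : g m ≤ n) : a m n ≤ ((n : ℝ) ^ 2)⁻¹ := by
    have hn1 : (1 : ℝ) ≤ n := by exact_mod_cast (hg m).trans_le hn
    rw [← one_div]
    exact (hbound m n hn).le.trans (one_div_pow_le_one_div_pow_of_le hn1 (hd m))
  have hrhs : (2 : ℝ) ^ ((1 : ℤ) - (k : ℤ)) = 2 * 2⁻¹ ^ k := by
    rw [zpow_sub₀ two_ne_zero, zpow_one, zpow_natCast, div_eq_mul_inv, inv_pow]
  have hpos : (0 : ℝ) < 2⁻¹ ^ k := by positivity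
  rw [hrhs]
  nlinarith [sum_Icc_tsum_tail_le ha hg hsq hgm k, tsum_tsum_tail_le ha hg hsq hgm k]
end
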